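/- arXiv:1108.0328 — 5 statements merged into one kernel-verified Lean document; each statement's English description precedes it below -/
import Mathlib

section
/- Let M be a connected smooth manifold with a Riemannian metric and f : M → ℝ a smooth proper function bounded from below. Then the negative gradient flow of f is complete, i.e., for every m ∈ M the integral curve of −∇f starting at m is defined for all t ≥ 0. -/
/-!
Along an integral curve of `-∇f` the function `f` is non-increasing, since
`df(-∇f) = -g(∇f, ∇f) ≤ 0`; hence the forward trajectory from `m₀` never leaves the sublevel set
`{f ≤ f m₀}`, which is compact because `f` is proper and bounded below. Picard–Lindelöf in charts
gives integral curves on a time interval `(-ε, ε)` of uniform length through every point of a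
compact set, so restarting the flow at time `b - ε / 2` extends a curve defined up to time `b` by
`ε / 2`, and uniqueness of integral curves glues these extensions into one curve defined for all
`t ≥ 0`.
-/

open scoped Manifold Topology
open Set Metric Filter

theorem IsProperMap.isCompact_preimage_Iic {X : Type*} [TopologicalSpace X] {f : X → ℝ}
    (hf : IsProperMap f) (hbdd : BddBelow (range f)) (d : ℝ) : IsCompact (f ⁻¹' Iic d) := by
  obtain ⟨c, hc⟩ := hbdd
  convert hf.isCompact_preimage (isCompact_Icc (a := c) (b := d)) using 1
  ext x
  simp [hc (mem_range_self x)]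

section IntegralCurve

variable
  {E : Type*} [NormedAddCommGroup E] [NormedSpace ℝ E]
  {H : Type*} [TopologicalSpace H] {I : ModelWithCorners ℝ E H}
  {M : Type*} [TopologicalSpace M] [ChartedSpace H M]
  {v : (x : M) → TangentSpace I x} {γ : ℝ → M} {a b : ℝ}

theorem IsMIntegralCurveOn.hasDerivAt_comp {f : M → ℝ} (hf : MDiff f)
    (hγ : IsMIntegralCurveOn γ v (Ioo a b)) {t : ℝ} (ht : t ∈ Ioo a b) :
    HasDerivAt (f ∘ γ) (mfderiv I 𝓘(ℝ) f (γ t) (v (γ t))) t := by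
  have h := (hf (γ t)).hasMFDerivAt.comp t ((hγ t ht).hasMFDerivAt (Ioo_mem_nhds ht.1 ht.2))
  exact hasDerivAt_iff_hasFDerivAt.mpr ((hasMFDerivAt_iff_hasFDerivAt.mp h).congr_fderiv
    (by ext; exact (mfderiv I 𝓘(ℝ) f (γ t)).map_smul (1 : ℝ) (v (γ t))))

-- `TangentSpace 𝓘(ℝ, ℝ) y` carries no order, hence the real `0` on the left.
theorem IsMIntegralCurveOn.antitoneOn_comp {f : M → ℝ} (hf : MDiff f)
    (hfv : ∀ x, (0 : ℝ) ≥ mfderiv I 𝓘(ℝ) f x (v x)) (hγ : IsMIntegralCurveOn γ v (Ioo a b)) :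
    AntitoneOn (f ∘ γ) (Ioo a b) := by
  have hd := fun t ht ↦ hγ.hasDerivAt_comp hf (t := t) ht
  apply antitoneOn_of_deriv_nonpos (convex_Ioo a b) (HasDerivAt.continuousOn hd)
  · rw [interior_Ioo]
    exact fun t ht ↦ (hd t ht).differentiableAt.differentiableWithinAt
  · rw [interior_Ioo]
    exact fun t ht ↦ (hd t ht).deriv ▸ hfv (γ t)

variable (v) in
def IsMForwardInvariant (K : Set M) : Prop :=
  ∀ (γ : ℝ → M) (a b : ℝ), a < 0 → IsMIntegralCurveOn γ v (Ioo a b) → γ 0 ∈ K →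
    ∀ t ∈ Ico 0 b, γ t ∈ K

theorem isMForwardInvariant_preimage_Iic {f : M → ℝ} (hf : MDiff f)
    (hfv : ∀ x, (0 : ℝ) ≥ mfderiv I 𝓘(ℝ) f x (v x)) (d : ℝ) :
    IsMForwardInvariant v (f ⁻¹' Iic d) := fun _ _ _ ha hγ hγ0 _ ht ↦
  (hγ.antitoneOn_comp hf hfv ⟨ha, ht.1.trans_lt ht.2⟩ ⟨ha.trans_le ht.1, ht.2⟩ ht.1).trans hγ0

variable [IsManifold I 1 M]

variable (I) in
noncomputable def vectorFieldInChart (v : (x : M) → TangentSpace I x) (x₀ : M) (z : E) : E :=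
  (extChartAt I.tangent (⟨x₀, v x₀⟩ : TangentBundle I M)
    ⟨(extChartAt I x₀).symm z, v ((extChartAt I x₀).symm z)⟩).2

theorem contDiffAt_vectorFieldInChart {x₀ : M}
    (hv : CMDiffAt 1 (fun x ↦ (⟨x, v x⟩ : TangentBundle I M)) x₀) (hx : I.IsInteriorPoint x₀) :
    ContDiffAt ℝ 1 (vectorFieldInChart I v x₀) (extChartAt I x₀ x₀) :=
  ((contMDiffAt_iff.mp hv).2.contDiffAt (range_mem_nhds_isInteriorPoint hx)).snd

theorem isMIntegralCurveOn_extChartAt_symm_comp {x₀ : M} {α : ℝ → E} {s : Set ℝ}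
    (hmem : MapsTo α s (interior (extChartAt I x₀).target))
    (hα : ∀ t ∈ s, HasDerivAt α (vectorFieldInChart I v x₀ (α t)) t) :
    IsMIntegralCurveOn ((extChartAt I x₀).symm ∘ α) v s := by
  intro t ht
  set xₜ : M := (extChartAt I x₀).symm (α t)
  have h : HasDerivAt α (tangentCoordChange I xₜ x₀ xₜ (v xₜ)) t := hα t ht
  have hint := hmem ht
  have htarget := interior_subset hint
  have hsource₀ := (extChartAt I x₀).map_target htarget
  have hsource := mem_extChartAt_source (I := I) xₜ
  refine HasMFDerivAt.hasMFDerivWithinAt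
    ⟨(continuousAt_extChartAt_symm'' htarget).comp h.continuousAt, ?_⟩
  simp only [mfld_simps]
  apply HasFDerivAt.hasFDerivWithinAt
  change HasDerivAt ((extChartAt I xₜ ∘ (extChartAt I x₀).symm) ∘ α) (v xₜ) t
  -- retyping `v xₜ` as a vector of `E` lets the coordinate changes below typecheck
  obtain ⟨w, hw⟩ : ∃ w : E, w = v xₜ := ⟨_, rfl⟩
  rw [← hw] at h ⊢
  rw [← tangentCoordChange_self (I := I) (x := xₜ) (z := xₜ) (v := w) hsource,
    ← tangentCoordChange_comp (x := x₀) ⟨⟨hsource, hsource₀⟩, hsource⟩]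
  apply HasFDerivAt.comp_hasDerivAt _ _ h
  apply HasFDerivWithinAt.hasFDerivAt (s := range I) _ <|
    mem_nhds_iff.mpr ⟨interior (extChartAt I x₀).target,
      interior_subset.trans (extChartAt_target_subset_range ..), isOpen_interior, hint⟩
  rw [← (extChartAt I x₀).right_inv htarget]
  exact hasFDerivWithinAt_tangentCoordChange ⟨hsource₀, hsource⟩

theorem exists_pos_eventually_exists_isMIntegralCurveOn [CompleteSpace E]
    [BoundarylessManifold I M]
    (hv : CMDiff 1 (fun x ↦ (⟨x, v x⟩ : TangentBundle I M))) (x₀ : M) :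
    ∃ ε > 0, ∀ᶠ y in 𝓝 x₀, ∃ γ : ℝ → M, γ 0 = y ∧ IsMIntegralCurveOn γ v (Ioo (-ε) ε) := by
  set e := extChartAt I x₀
  have hx₀ : I.IsInteriorPoint x₀ := BoundarylessManifold.isInteriorPoint
  obtain ⟨ε, hε, _, r, _, _, hr, hpl⟩ :=
    IsPicardLindelof.of_contDiffAt_one (contDiffAt_vectorFieldInChart (hv x₀) hx₀)
  obtain ⟨α, hα, hαcont⟩ := (hpl 0).exists_forall_mem_closedBall_eq_hasDerivWithinAt_continuousOn
  have hdom : closedBall (e x₀) r ×ˢ Icc (0 - ε) (0 + ε) ∈ 𝓝 (e x₀, (0 : ℝ)) :=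
    prod_mem_nhds (closedBall_mem_nhds _ hr) (Icc_mem_nhds (by linarith) (by linarith))
  -- by continuity of the local flow, solutions starting near `e x₀` stay in the chart for a while
  have hstay : closedBall (e x₀) r ×ˢ Icc (0 - ε) (0 + ε) ∩ α ⁻¹' interior e.target ∈
      𝓝 (e x₀, (0 : ℝ)) := by
    refine inter_mem hdom ((hαcont.continuousAt hdom).preimage_mem_nhds ?_)
    rw [(hα _ (mem_closedBall_self hr.le)).1]
    exact isOpen_interior.mem_nhds ((I.isInteriorPoint_iff).mp hx₀)
  obtain ⟨U, hU, T, hT, hUT⟩ := mem_nhds_prod_iff.mp hstay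
  obtain ⟨δ, hδ, hδT⟩ := Metric.mem_nhds_iff.mp hT
  refine ⟨δ, hδ, ?_⟩
  filter_upwards [extChartAt_source_mem_nhds (I := I) x₀,
    (continuousAt_extChartAt (I := I) x₀).preimage_mem_nhds hU] with y hy hyU
  have hball : ∀ t ∈ ball (0 : ℝ) δ, (e y, t) ∈ closedBall (e x₀) r ×ˢ Icc (0 - ε) (0 + ε) ∧
      α (e y, t) ∈ interior e.target := fun t ht ↦ hUT ⟨hyU, hδT ht⟩
  have hIcc : ∀ t ∈ ball (0 : ℝ) δ, Icc (0 - ε) (0 + ε) ∈ 𝓝 t := fun t ht ↦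
    mem_of_superset (isOpen_ball.mem_nhds ht) fun s hs ↦ (hball s hs).1.2
  rw [← Real.ball_zero_eq_Ioo]
  refine ⟨e.symm ∘ fun t ↦ α (e y, t), ?_, isMIntegralCurveOn_extChartAt_symm_comp
    (fun t ht ↦ (hball t ht).2) fun t ht ↦ ?_⟩
  · simp [(hα _ (hball 0 (mem_ball_self hδ)).1.1).1, e.left_inv hy]
  · exact ((hα _ (hball t ht).1.1).2 t (hball t ht).1.2).hasDerivAt (hIcc t ht)

theorem IsCompact.exists_pos_forall_exists_isMIntegralCurveOn [CompleteSpace E]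
    [BoundarylessManifold I M]
    (hv : CMDiff 1 (fun x ↦ (⟨x, v x⟩ : TangentBundle I M))) {K : Set M} (hK : IsCompact K) :
    ∃ ε > 0, ∀ y ∈ K, ∃ γ : ℝ → M, γ 0 = y ∧ IsMIntegralCurveOn γ v (Ioo (-ε) ε) := by
  refine hK.induction_on ⟨1, one_pos, by simp⟩
    (fun _ _ hst ⟨ε, hε, h⟩ ↦ ⟨ε, hε, fun y hy ↦ h y (hst hy)⟩)
    (fun _ _ ⟨ε, hε, hs⟩ ⟨ε', hε', ht⟩ ↦ ⟨min ε ε', lt_min hε hε', ?_⟩) fun x _ ↦ ?_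
  · rintro y (hy | hy)
    · obtain ⟨γ, hγ0, hγ⟩ := hs y hy
      exact ⟨γ, hγ0, hγ.mono (Ioo_subset_Ioo (by simp) (min_le_left _ _))⟩
    · obtain ⟨γ, hγ0, hγ⟩ := ht y hy
      exact ⟨γ, hγ0, hγ.mono (Ioo_subset_Ioo (by simp) (min_le_right _ _))⟩
  · obtain ⟨ε, hε, h⟩ := exists_pos_eventually_exists_isMIntegralCurveOn hv x
    exact ⟨_, mem_nhdsWithin_of_mem_nhds h, ε, hε, fun y hy ↦ hy⟩

theorem IsMIntegralCurveOn.exists_eqOn_isMIntegralCurveOn_Ioo [T2Space M]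
    [BoundarylessManifold I M] (hv : CMDiff 1 (fun x ↦ (⟨x, v x⟩ : TangentBundle I M)))
    (hγ : IsMIntegralCurveOn γ v (Ioo a b)) {t₁ ε : ℝ} (ht₁ : t₁ ∈ Ioo a b) (hε : 0 < ε)
    {α : ℝ → M} (hα0 : α 0 = γ t₁) (hα : IsMIntegralCurveOn α v (Ioo (-ε) ε)) :
    ∃ γ' : ℝ → M, EqOn γ' γ (Ioo a b) ∧ IsMIntegralCurveOn γ' v (Ioo a (t₁ + ε)) := by
  have hβ : IsMIntegralCurveOn (α ∘ (· - t₁)) v (Ioo (t₁ - ε) (t₁ + ε)) := by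
    convert isMIntegralCurveOn_comp_sub.mpr hα using 1
    ext t
    simp only [mem_Ioo, mem_ofPred_eq]
    constructor <;> rintro ⟨h₁, h₂⟩ <;> constructor <;> linarith
  refine ⟨piecewise (Ioo a b) γ (α ∘ (· - t₁)), piecewise_eqOn _ _ _,
    (isMIntegralCurveOn_piecewise hv hγ hβ ⟨ht₁, by linarith, by linarith⟩ ?_).mono
      (Ioo_subset_Ioo_union_Ioo le_rfl (by linarith [ht₁.2]) le_rfl)⟩
  simp [hα0]

theorem exists_isMIntegralCurveOn_Ioo_of_isMForwardInvariant [T2Space M]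
    [BoundarylessManifold I M] (hv : CMDiff 1 (fun x ↦ (⟨x, v x⟩ : TangentBundle I M)))
    {K : Set M} (hinv : IsMForwardInvariant v K) {ε : ℝ} (hε : 0 < ε)
    (hloc : ∀ y ∈ K, ∃ γ : ℝ → M, γ 0 = y ∧ IsMIntegralCurveOn γ v (Ioo (-ε) ε))
    {x : M} (hx : x ∈ K) (T : ℝ) :
    ∃ γ : ℝ → M, γ 0 = x ∧ IsMIntegralCurveOn γ v (Ioo (-ε) T) := by
  suffices h : ∀ n : ℕ, ∃ γ : ℝ → M, γ 0 = x ∧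
      IsMIntegralCurveOn γ v (Ioo (-ε) (ε + n * (ε / 2))) by
    obtain ⟨n, hn⟩ := exists_nat_ge (T / (ε / 2))
    obtain ⟨γ, hγ0, hγ⟩ := h n
    refine ⟨γ, hγ0, hγ.mono (Ioo_subset_Ioo le_rfl ?_)⟩
    have := (div_le_iff₀ (half_pos hε)).mp hn
    linarith
  intro n
  induction n with
  | zero => simpa using hloc x hx
  | succ n ih =>
    obtain ⟨γ, hγ0, hγ⟩ := ih
    set b := ε + n * (ε / 2)
    have hb : ε ≤ b := le_add_of_nonneg_right (by positivity)
    have ht₁ : b - ε / 2 ∈ Ioo (-ε) b := ⟨by linarith, by linarith⟩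
    obtain ⟨α, hα0, hα⟩ := hloc _ (hinv γ _ _ (neg_lt_zero.mpr hε) hγ (hγ0 ▸ hx) _
      ⟨by linarith, ht₁.2⟩)
    obtain ⟨γ', hγ'γ, hγ'⟩ := hγ.exists_eqOn_isMIntegralCurveOn_Ioo hv ht₁ hε hα0 hα
    refine ⟨γ', (hγ'γ ⟨neg_lt_zero.mpr hε, by linarith⟩).trans hγ0, ?_⟩
    convert hγ' using 2
    push_cast
    ring

theorem exists_isMIntegralCurveOn_Ioi_of_forall_Ioo [T2Space M]
    [BoundarylessManifold I M] (hv : CMDiff 1 (fun x ↦ (⟨x, v x⟩ : TangentBundle I M)))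
    {c : ℝ} (hc : c < 0) {x : M}
    (h : ∀ T, ∃ γ : ℝ → M, γ 0 = x ∧ IsMIntegralCurveOn γ v (Ioo c T)) :
    ∃ γ : ℝ → M, γ 0 = x ∧ IsMIntegralCurveOn γ v (Ioi c) := by
  choose γ hγ0 hγ using h
  have heq : ∀ {T T'}, 0 < T → 0 < T' → EqOn (γ T) (γ T') (Ioo c (min T T')) := fun hT hT' ↦
    isMIntegralCurveOn_Ioo_eqOn_of_contMDiff_boundaryless ⟨hc, lt_min hT hT'⟩ hv
      ((hγ _).mono (Ioo_subset_Ioo le_rfl (min_le_left _ _)))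
      ((hγ _).mono (Ioo_subset_Ioo le_rfl (min_le_right _ _))) (by rw [hγ0, hγ0])
  have hloc : ∀ t, EqOn (fun s ↦ γ (|s| + 1) s) (γ (|t| + 2)) (Ioo c (|t| + 1)) :=
    fun t s hs ↦ heq (by positivity) (by positivity)
      ⟨hs.1, lt_min (lt_of_le_of_lt (le_abs_self s) (lt_add_one _)) (by linarith [hs.2])⟩
  refine ⟨fun t ↦ γ (|t| + 1) t, hγ0 _, fun t ht ↦ HasMFDerivAt.hasMFDerivWithinAt ?_⟩
  have ht' : t ∈ Ioo c (|t| + 1) := ⟨ht, lt_of_le_of_lt (le_abs_self t) (lt_add_one _)⟩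
  rw [hloc t ht']
  exact ((hγ _ t ⟨ht, by linarith [ht'.2]⟩).hasMFDerivAt (Ioo_mem_nhds ht (by linarith [ht'.2])))
    |>.congr_of_eventuallyEq (eventuallyEq_of_mem (Ioo_mem_nhds ht'.1 ht'.2) (hloc t))

theorem IsMForwardInvariant.exists_forall_isMIntegralCurveAt [CompleteSpace E] [T2Space M]
    [BoundarylessManifold I M] (hv : CMDiff 1 (fun x ↦ (⟨x, v x⟩ : TangentBundle I M)))
    {K : Set M} (hinv : IsMForwardInvariant v K) (hK : IsCompact K) {x : M} (hx : x ∈ K) :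
    ∃ γ : ℝ → M, γ 0 = x ∧ ∀ t ≥ 0, IsMIntegralCurveAt γ v t := by
  obtain ⟨ε, hε, hloc⟩ := hK.exists_pos_forall_exists_isMIntegralCurveOn hv
  obtain ⟨γ, hγ0, hγ⟩ := exists_isMIntegralCurveOn_Ioi_of_forall_Ioo hv (neg_lt_zero.mpr hε)
    (exists_isMIntegralCurveOn_Ioo_of_isMForwardInvariant hv hinv hε hloc hx)
  exact ⟨γ, hγ0, fun t ht ↦ hγ.isMIntegralCurveAt (Ioi_mem_nhds (by linarith))⟩

end IntegralCurve

theorem neg_gradient_flow_complete_general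
    {m : ℕ} {M : Type*} [TopologicalSpace M] [T2Space M]
    [ChartedSpace (EuclideanSpace ℝ (Fin m)) M]
    [IsManifold (𝓡 m) (⊤ : ℕ∞) M]
    (f : M → ℝ) (hf : ContMDiff (𝓡 m) 𝓘(ℝ, ℝ) (⊤ : ℕ∞) f)
    (hproper : IsProperMap f) (hbdd : BddBelow (Set.range f))
    (g : ∀ x : M, TangentSpace (𝓡 m) x →ₗ[ℝ] TangentSpace (𝓡 m) x →ₗ[ℝ] ℝ)
    (hposdef : ∀ x (v : TangentSpace (𝓡 m) x), v ≠ 0 → 0 < g x v v)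
    (grad : ∀ x : M, TangentSpace (𝓡 m) x)
    (hgrad : ∀ x (v : TangentSpace (𝓡 m) x),
      g x (grad x) v = mfderiv (𝓡 m) 𝓘(ℝ, ℝ) f x v)
    (hgrad_smooth : ContMDiff (𝓡 m) ((𝓡 m).tangent) (⊤ : ℕ∞)
      (fun x : M => (⟨x, grad x⟩ : TangentBundle (𝓡 m) M))) :
    ∀ m₀ : M, ∃ γ : ℝ → M, γ 0 = m₀ ∧ ∀ t : ℝ, 0 ≤ t →
      HasMFDerivAt 𝓘(ℝ, ℝ) (𝓡 m) γ t
        ((1 : ℝ →L[ℝ] ℝ).smulRight (-grad (γ t))) := by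
  intro m₀
  have : IsManifold (𝓡 m) 1 M := .of_le (n := (⊤ : ℕ∞)) (by simp)
  have hv : ContMDiff (𝓡 m) (𝓡 m).tangent 1 (fun x ↦ (⟨x, -grad x⟩ : TangentBundle (𝓡 m) M)) :=
    hgrad_smooth.neg_section.of_le (by simp)
  have hdescent : ∀ x, (0 : ℝ) ≥ mfderiv (𝓡 m) 𝓘(ℝ) f x (-grad x) := fun x ↦ by
    rw [← hgrad, map_neg, ge_iff_le, neg_nonpos]
    rcases eq_or_ne (grad x) 0 with h | h
    · simp [h]
    · exact (hposdef x _ h).le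
  obtain ⟨γ, hγ0, hγ⟩ := (isMForwardInvariant_preimage_Iic (hf.mdifferentiable (by simp))
    hdescent (f m₀)).exists_forall_isMIntegralCurveAt hv (hproper.isCompact_preimage_Iic hbdd _)
    (show f m₀ ≤ f m₀ from le_rfl)
  exact ⟨γ, hγ0, fun t ht ↦ (hγ t ht).hasMFDerivAt⟩

/-- On a connected Riemannian manifold (metric `g`, gradient `grad` of `f` defined by
`g x (grad x) v = df_x(v)`), if `f` is smooth, proper and bounded below, then the
negative gradient flow of `f` is forward complete: through each point there is an
integral curve of `−∇f` defined for all `t ≥ 0`. -/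
theorem neg_gradient_flow_complete
    {m : ℕ} {M : Type*} [TopologicalSpace M] [T2Space M] [SecondCountableTopology M]
    [ChartedSpace (EuclideanSpace ℝ (Fin m)) M]
    [IsManifold (𝓡 m) (⊤ : ℕ∞) M] [ConnectedSpace M]
    (f : M → ℝ) (hf : ContMDiff (𝓡 m) 𝓘(ℝ, ℝ) (⊤ : ℕ∞) f)
    (hproper : IsProperMap f) (hbdd : BddBelow (Set.range f))
    (g : ∀ x : M, TangentSpace (𝓡 m) x →ₗ[ℝ] TangentSpace (𝓡 m) x →ₗ[ℝ] ℝ)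
    (hsymm : ∀ x u v, g x u v = g x v u)
    (hposdef : ∀ x (v : TangentSpace (𝓡 m) x), v ≠ 0 → 0 < g x v v)
    (grad : ∀ x : M, TangentSpace (𝓡 m) x)
    (hgrad : ∀ x (v : TangentSpace (𝓡 m) x),
      g x (grad x) v = mfderiv (𝓡 m) 𝓘(ℝ, ℝ) f x v)
    (hgrad_smooth : ContMDiff (𝓡 m) ((𝓡 m).tangent) (⊤ : ℕ∞)
      (fun x : M => (⟨x, grad x⟩ : TangentBundle (𝓡 m) M))) :
    ∀ m₀ : M, ∃ γ : ℝ → M, γ 0 = m₀ ∧ ∀ t : ℝ, 0 ≤ t →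
      HasMFDerivAt 𝓘(ℝ, ℝ) (𝓡 m) γ t
        ((1 : ℝ →L[ℝ] ℝ).smulRight (-grad (γ t))) :=
  neg_gradient_flow_complete_general f hf hproper hbdd g hposdef grad hgrad hgrad_smooth
end

section
/- Let J have connected level sets and H be continuous, so that for each x ∈ J(M), H(J⁻¹(x)) is an interval with closure [H⁻(x), H⁺(x)]. If F := (J,H) has closed image in ℝ² and H⁻ is upper semicontinuous, then H⁺ is upper semicontinuous: there is no point x₀ ∈ J(M), ε₀ > 0, and sequence xₙ → x₀ in J(M) with H⁺(xₙ) ≥ H⁺(x₀) + ε₀. -/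
open Filter

/-- Upper semicontinuity of `H⁺` (part of the proof of Theorem 4.3): if `J` has
connected level sets, `H` is continuous, `F = (J, H)` has closed image in `ℝ²` and
`H⁻` is upper semicontinuous, then there is no point `x₀ ∈ J(M)` with `H⁺(x₀)` finite,
`ε₀ > 0` and sequence `xₙ → x₀` in `J(M)` with `H⁺(xₙ) ≥ H⁺(x₀) + ε₀`. -/
theorem sup_function_upper_semicontinuous
    {M : Type*} [TopologicalSpace M] [ConnectedSpace M]
    (J H : M → ℝ) (hJ : Continuous J) (hH : Continuous H)
    (hfib : ∀ c : ℝ, IsPreconnected (J ⁻¹' {c}))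
    (hclosed : IsClosed (Set.range fun x => (J x, H x)))
    (Hp Hm : ℝ → EReal)
    (hHp : ∀ x : ℝ, Hp x = sSup ((fun z => (H z : EReal)) '' (J ⁻¹' {x})))
    (hHm : ∀ x : ℝ, Hm x = sInf ((fun z => (H z : EReal)) '' (J ⁻¹' {x})))
    (hHm_usc : UpperSemicontinuousOn Hm (Set.range J)) :
    ¬ ∃ x₀ ∈ Set.range J, Hp x₀ ≠ ⊤ ∧ ∃ ε₀ : ℝ, 0 < ε₀ ∧ ∃ u : ℕ → ℝ,
      (∀ n, u n ∈ Set.range J) ∧ Tendsto u atTop (nhds x₀) ∧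
      ∀ n, Hp x₀ + (ε₀ : EReal) ≤ Hp (u n) := by
  rintro ⟨x₀, ⟨m₀, hm₀⟩, hfin, ε₀, hε₀, u, hu_mem, hu_tend, hu_ge⟩
  -- Hp x₀ is a finite real number a
  have hmem₀ : (H m₀ : EReal) ∈ (fun z => (H z : EReal)) '' (J ⁻¹' {x₀}) :=
    ⟨m₀, by simpa using hm₀, rfl⟩
  have hle₀ : (H m₀ : EReal) ≤ Hp x₀ := (hHp x₀) ▸ le_sSup hmem₀
  have hbot : Hp x₀ ≠ ⊥ := ne_of_gt (lt_of_lt_of_le (EReal.bot_lt_coe _) hle₀)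
  obtain ⟨a, ha⟩ : ∃ a : ℝ, (a : EReal) = Hp x₀ := ⟨_, EReal.coe_toReal hfin hbot⟩
  -- Hm x₀ < a + ε₀/2
  have hHm_lt : Hm x₀ < ((a + ε₀ / 2 : ℝ) : EReal) := by
    have h1 : Hm x₀ ≤ (H m₀ : EReal) := (hHm x₀) ▸ sInf_le hmem₀
    have h2 : (H m₀ : EReal) ≤ (a : EReal) := ha ▸ hle₀
    have h3 : (a : EReal) < ((a + ε₀ / 2 : ℝ) : EReal) := by
      exact_mod_cast (by linarith : a < a + ε₀ / 2)
    exact lt_of_le_of_lt (h1.trans h2) h3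
  -- eventually, Hm (u n) < a + ε₀/2
  have hu_tend' : Tendsto u atTop (nhdsWithin x₀ (Set.range J)) :=
    tendsto_nhdsWithin_of_tendsto_nhds_of_eventually_within u hu_tend
      (Eventually.of_forall hu_mem)
  have hev : ∀ᶠ n in atTop, Hm (u n) < ((a + ε₀ / 2 : ℝ) : EReal) :=
    hu_tend' (hHm_usc x₀ ⟨m₀, hm₀⟩ _ hHm_lt)
  -- eventually, (u n, a + ε₀/2) is in the range of F
  have hkey : ∀ᶠ n in atTop,
      (u n, a + ε₀ / 2) ∈ Set.range fun x => (J x, H x) := by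
    filter_upwards [hev] with n hn
    -- a point below a + ε₀/2 in the fiber
    have hinf : sInf ((fun z => (H z : EReal)) '' (J ⁻¹' {u n}))
        < ((a + ε₀ / 2 : ℝ) : EReal) := (hHm (u n)) ▸ hn
    obtain ⟨b, ⟨w, hw, rfl⟩, hbw⟩ := sInf_lt_iff.mp hinf
    have hbw' : ((H w : ℝ) : EReal) < ((a + ε₀ / 2 : ℝ) : EReal) := hbw
    have hw_lt : H w < a + ε₀ / 2 := by exact_mod_cast hbw'
    -- a point above a + ε₀/2 in the fiber
    have hsup : ((a + ε₀ / 2 : ℝ) : EReal)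
        < sSup ((fun z => (H z : EReal)) '' (J ⁻¹' {u n})) := by
      rw [← hHp]
      refine lt_of_lt_of_le ?_ (hu_ge n)
      rw [← ha]
      have hca : ((a + ε₀ : ℝ) : EReal) = (a : EReal) + (ε₀ : EReal) :=
        EReal.coe_add a ε₀
      rw [← hca]
      exact_mod_cast (by linarith : a + ε₀ / 2 < a + ε₀)
    obtain ⟨b, ⟨z, hz, rfl⟩, hbz⟩ := lt_sSup_iff.mp hsup
    have hbz' : ((a + ε₀ / 2 : ℝ) : EReal) < ((H z : ℝ) : EReal) := hbz
    have hz_gt : a + ε₀ / 2 < H z := by exact_mod_cast hbz'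
    -- intermediate value on the connected fiber
    have himg : IsPreconnected (H '' (J ⁻¹' {u n})) :=
      (hfib (u n)).image H hH.continuousOn
    have hoc : (H '' (J ⁻¹' {u n})).OrdConnected := himg.ordConnected
    have hy : a + ε₀ / 2 ∈ H '' (J ⁻¹' {u n}) :=
      hoc.out ⟨w, hw, rfl⟩ ⟨z, hz, rfl⟩ ⟨hw_lt.le, hz_gt.le⟩
    obtain ⟨p, hp, hpy⟩ := hy
    refine ⟨p, ?_⟩
    simp only [Set.mem_preimage, Set.mem_singleton_iff] at hp
    show (J p, H p) = _
    rw [hp, hpy]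
  -- closedness: (x₀, a + ε₀/2) in the range of F
  have hlim : Tendsto (fun n => (u n, a + ε₀ / 2)) atTop (nhds (x₀, a + ε₀ / 2)) :=
    hu_tend.prodMk_nhds tendsto_const_nhds
  obtain ⟨p, hp⟩ := hclosed.mem_of_tendsto hlim hkey
  have hpJ : J p = x₀ := congrArg Prod.fst hp
  have hpH : H p = a + ε₀ / 2 := congrArg Prod.snd hp
  -- contradiction: a + ε₀/2 ≤ Hp x₀ = a
  have hle : ((a + ε₀ / 2 : ℝ) : EReal) ≤ Hp x₀ := by
    rw [hHp]
    exact le_sSup ⟨p, by simp [hpJ], by simp [hpH]⟩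
  rw [← ha] at hle
  have : a + ε₀ / 2 ≤ a := by exact_mod_cast hle
  linarith
end

section
/- For the map F(h,a,b,c) = (h cos(nb), h sin(nb)) on M = S² × S¹ × S¹ with h ∈ [1,2], the image F(M) is the closed annulus {v ∈ ℝ² : 1 ≤ |v| ≤ 2}, and the fiber over any point v with 1 < |v| < 2 has exactly n connected components (each diffeomorphic to a 2-torus). -/
/-!
Writing `v = r (cos θ, sin θ)` with `1 < r < 2`, the fiber of `F` over `v` is
`{h = r, n • b = θ}`. The equation `n • b = θ` has exactly `n` solutions on the circle, and
the `b`-coordinate is a continuous map from the fiber to this finite, hence discrete, set whose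
fibers are the tori `{h = r} × S¹ × {b} × S¹`. So the connected components of the fiber are
exactly these `n` tori.
-/

open Real Set Topology

namespace AddCircle

variable {𝕜 : Type*} [Field 𝕜] [LinearOrder 𝕜] [IsStrictOrderedRing 𝕜] [FloorRing 𝕜] {p : 𝕜}
  [Fact (0 < p)] {n : ℕ}

theorem nsmul_eq_zero_iff_mem_zmultiples (hn : 0 < n) {u : AddCircle p} :
    n • u = 0 ↔ u ∈ AddSubgroup.zmultiples ((p / n : 𝕜) : AddCircle p) := by
  constructor
  · intro hu
    obtain ⟨m, -, rfl⟩ := (AddCircle.nsmul_eq_zero_iff hn).1 hu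
    exact ⟨m, by simp only [natCast_zsmul, natCast_div_mul_eq_nsmul]⟩
  · rintro ⟨m, rfl⟩
    rw [smul_comm, ← coe_nsmul, nsmul_eq_mul, mul_div_cancel₀ _ (by positivity), coe_period,
      smul_zero]

theorem card_nsmul_eq_zero (hn : 0 < n) : Nat.card {u : AddCircle p // n • u = 0} = n := by
  simp_rw [nsmul_eq_zero_iff_mem_zmultiples hn]
  exact (Nat.card_zmultiples _).trans (addOrderOf_period_div hn)

end AddCircle

-- `Real.Angle` is a plain `def`, so instances of `AddCircle (2 * π)` are not found through it.
instance : ConnectedSpace Real.Angle :=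
  inferInstanceAs (ConnectedSpace (AddCircle (2 * π)))

namespace Real.Angle

theorem eq_of_cos_eq_of_sin_eq {θ ψ : Angle} (hc : θ.cos = ψ.cos) (hs : θ.sin = ψ.sin) :
    θ = ψ := by
  induction θ using Real.Angle.induction_on
  induction ψ using Real.Angle.induction_on
  rw [cos_coe, cos_coe] at hc
  rw [sin_coe, sin_coe] at hs
  exact cos_sin_inj hc hs

theorem exists_nsmul_eq {n : ℕ} (hn : n ≠ 0) (ψ : Angle) : ∃ θ : Angle, n • θ = ψ :=
  ⟨(ψ.toReal / n : ℝ), by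
    rw [← coe_nsmul, nsmul_eq_mul, mul_div_cancel₀ _ (Nat.cast_ne_zero.2 hn), coe_toReal]⟩

theorem card_nsmul_eq {n : ℕ} (hn : 0 < n) (ψ : Angle) :
    Nat.card {θ : Angle // n • θ = ψ} = n := by
  have : Fact (0 < 2 * π) := ⟨two_pi_pos⟩
  obtain ⟨θ₀, rfl⟩ := exists_nsmul_eq hn.ne' ψ
  exact (Nat.card_congr ((nsmulAddMonoidHom n : Angle →+ Angle).fiberEquivKer θ₀)).trans
    (AddCircle.card_nsmul_eq_zero hn)

end Real.Angle

theorem sqrt_polar_sq (h : ℝ) (α : Real.Angle) :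
    √((h * α.cos) ^ 2 + (h * α.sin) ^ 2) = |h| := by
  rw [mul_pow, mul_pow, ← mul_add, Real.Angle.cos_sq_add_sin_sq, mul_one, Real.sqrt_sq_eq_abs]

theorem polar_eq_polar_iff {h r : ℝ} (hh : 0 ≤ h) (hr : 0 < r) {α θ : Real.Angle} :
    (h * α.cos, h * α.sin) = (r * θ.cos, r * θ.sin) ↔ h = r ∧ α = θ := by
  refine ⟨fun he => ?_, by rintro ⟨rfl, rfl⟩; rfl⟩
  obtain ⟨hc, hs⟩ : h * α.cos = r * θ.cos ∧ h * α.sin = r * θ.sin := Prod.ext_iff.1 he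
  have hhr : h = r := by
    rw [← abs_of_nonneg hh, ← abs_of_pos hr, ← sqrt_polar_sq h α, ← sqrt_polar_sq r θ, hc, hs]
  subst hhr
  exact ⟨rfl, Real.Angle.eq_of_cos_eq_of_sin_eq (mul_left_cancel₀ hr.ne' hc)
    (mul_left_cancel₀ hr.ne' hs)⟩

theorem exists_eq_polar (v : ℝ × ℝ) :
    ∃ θ : Real.Angle, v = (√(v.1 ^ 2 + v.2 ^ 2) * θ.cos, √(v.1 ^ 2 + v.2 ^ 2) * θ.sin) := by
  have hnorm : ‖(⟨v.1, v.2⟩ : ℂ)‖ = √(v.1 ^ 2 + v.2 ^ 2) := by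
    rw [Complex.norm_def, Complex.normSq_mk]; ring_nf
  refine ⟨Complex.arg ⟨v.1, v.2⟩, ?_⟩
  rw [Real.Angle.cos_coe, Real.Angle.sin_coe, ← hnorm, Complex.norm_mul_cos_arg,
    Complex.norm_mul_sin_arg]

section ComponentsOfFibers

variable {X S : Type*} [TopologicalSpace X] [TopologicalSpace S] {K : Set X} {g : X → S}
  {T : Set S}

theorem connectedComponentIn_eq_inter_preimage (hT : IsDiscrete T) (hg : ContinuousOn g K)
    (hgK : MapsTo g K T) (hfib : ∀ s, IsPreconnected (K ∩ g ⁻¹' {s})) {x : X} (hx : x ∈ K) :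
    connectedComponentIn K x = K ∩ g ⁻¹' {g x} := by
  refine Subset.antisymm (fun y hy => ?_)
    ((hfib (g x)).subset_connectedComponentIn ⟨hx, rfl⟩ inter_subset_left)
  have hsub := connectedComponentIn_subset K x
  exact ⟨hsub hy, isPreconnected_connectedComponentIn.constant_of_mapsTo hT (hg.mono hsub)
    (hgK.mono_left hsub) hy (mem_connectedComponentIn hx)⟩

theorem card_connectedComponents_eq_card_image (hT : IsDiscrete T) (hg : ContinuousOn g K)
    (hgK : MapsTo g K T) (hfib : ∀ s, IsPreconnected (K ∩ g ⁻¹' {s})) :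
    Nat.card (ConnectedComponents K) = Nat.card (g '' K) := by
  let f : K → g '' K := fun p => ⟨g p, mem_image_of_mem g p.2⟩
  have hf : Function.Surjective f := by
    rintro ⟨_, p, hp, rfl⟩
    exact ⟨⟨p, hp⟩, rfl⟩
  have hrel : ∀ p q : K, connectedComponentSetoid K p q ↔ Setoid.ker f p q := by
    intro p q
    change connectedComponent p = connectedComponent q ↔ f p = f q
    rw [← ConnectedComponents.coe_eq_coe, ConnectedComponents.coe_eq_coe',
      ← Subtype.val_injective.mem_set_image, ← connectedComponentIn_eq_image q.2,
      connectedComponentIn_eq_inter_preimage hT hg hgK hfib q.2, Subtype.ext_iff]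
    simp [p.2, f]
  exact Nat.card_congr
    ((Quotient.congrRight hrel).trans (Setoid.quotientKerEquivOfSurjective f hf))

end ComponentsOfFibers

section TorusSlice

variable {H A B C : Type*}

def torusSlice (h : H) (b : B) (ac : A × C) : H × A × B × C := (h, ac.1, b, ac.2)

theorem range_torusSlice (h : H) (b : B) :
    range (torusSlice h b : A × C → H × A × B × C) = {p | p.1 = h ∧ p.2.2.1 = b} := by
  ext ⟨h', a, b', c⟩
  simp [torusSlice, eq_comm]

variable [TopologicalSpace H] [TopologicalSpace A] [TopologicalSpace B] [TopologicalSpace C]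

theorem continuous_torusSlice (h : H) (b : B) : Continuous (torusSlice h b : A × C → _) := by
  unfold torusSlice; fun_prop

theorem isEmbedding_torusSlice (h : H) (b : B) : IsEmbedding (torusSlice h b : A × C → _) :=
  Function.LeftInverse.isEmbedding (f := fun p : H × A × B × C => (p.2.1, p.2.2.2))
    (fun _ => rfl) (by fun_prop) (continuous_torusSlice h b)

end TorusSlice

section NsmulFiber

variable {H A C : Type*} [TopologicalSpace H] [TopologicalSpace A] [TopologicalSpace C]
  [ConnectedSpace A] [ConnectedSpace C] {n : ℕ} {ρ : H} {θ : Real.Angle}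

theorem isDiscrete_setOf_nsmul_eq (hn : 0 < n) : IsDiscrete {b : Real.Angle | n • b = θ} :=
  have : Finite {b : Real.Angle // n • b = θ} :=
    Nat.finite_of_card_ne_zero (by rw [Real.Angle.card_nsmul_eq hn θ]; exact hn.ne')
  (Set.finite_coe_iff.mp this).isDiscrete

theorem isPreconnected_setOf_nsmul_eq_inter_preimage (s : Real.Angle) :
    IsPreconnected ({p : H × A × Real.Angle × C | p.1 = ρ ∧ n • p.2.2.1 = θ} ∩
      (fun p => p.2.2.1) ⁻¹' {s}) := by
  by_cases hs : n • s = θ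
  · convert isPreconnected_range (continuous_torusSlice (A := A) (C := C) ρ s) using 1
    rw [range_torusSlice]
    ext p
    simp only [mem_inter_iff, mem_ofPred_eq, mem_preimage, mem_singleton_iff]
    grind
  · convert isPreconnected_empty
    ext p
    simp only [mem_inter_iff, mem_ofPred_eq, mem_preimage, mem_singleton_iff, mem_empty_iff_false,
      iff_false]
    grind

theorem connectedComponentIn_setOf_nsmul_eq (hn : 0 < n) {x : H × A × Real.Angle × C}
    (hx : x ∈ {p : H × A × Real.Angle × C | p.1 = ρ ∧ n • p.2.2.1 = θ}) :
    connectedComponentIn {p : H × A × Real.Angle × C | p.1 = ρ ∧ n • p.2.2.1 = θ} x =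
      range (torusSlice x.1 x.2.2.1) := by
  rw [connectedComponentIn_eq_inter_preimage (isDiscrete_setOf_nsmul_eq hn) (by fun_prop)
    (fun p hp => hp.2) isPreconnected_setOf_nsmul_eq_inter_preimage hx, range_torusSlice]
  ext p
  simp only [mem_inter_iff, mem_ofPred_eq, mem_preimage, mem_singleton_iff]
  grind

theorem card_connectedComponents_setOf_nsmul_eq (hn : 0 < n) :
    Nat.card (ConnectedComponents {p : H × A × Real.Angle × C | p.1 = ρ ∧ n • p.2.2.1 = θ}) =
      n := by
  rw [card_connectedComponents_eq_card_image (isDiscrete_setOf_nsmul_eq hn) (by fun_prop)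
    (fun p hp => hp.2) isPreconnected_setOf_nsmul_eq_inter_preimage]
  have himage : (fun p : H × A × Real.Angle × C => p.2.2.1) ''
      {p | p.1 = ρ ∧ n • p.2.2.1 = θ} = {b | n • b = θ} := by
    refine Subset.antisymm (fun _ ⟨p, hp, hpb⟩ => hpb ▸ hp.2) (fun b hb => ?_)
    exact ⟨(ρ, Classical.arbitrary A, b, Classical.arbitrary C), ⟨rfl, hb⟩, rfl⟩
  rw [himage]
  exact Real.Angle.card_nsmul_eq hn θ

end NsmulFiber

theorem preimage_polar_nsmul_singleton {A C : Type*} (n : ℕ) (ρ : Icc (1 : ℝ) 2)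
    (θ : Real.Angle) :
    (fun p : Icc (1 : ℝ) 2 × A × Real.Angle × C =>
        ((p.1 : ℝ) * (n • p.2.2.1).cos, (p.1 : ℝ) * (n • p.2.2.1).sin)) ⁻¹'
      {((ρ : ℝ) * θ.cos, (ρ : ℝ) * θ.sin)} = {p | p.1 = ρ ∧ n • p.2.2.1 = θ} := by
  ext p
  simp only [mem_preimage, mem_singleton_iff, mem_ofPred_eq, Subtype.ext_iff]
  exact polar_eq_polar_iff (zero_le_one.trans p.1.2.1) (zero_lt_one.trans_le ρ.2.1)

/-- Example 3.9 of the paper: for `F(h,a,b,c) = (h cos(nb), h sin(nb))` on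
`M = [1,2] × S¹ × S¹ × S¹` (the coordinates `(h, a)` on `S²` and `(b, c)` on
`S¹ × S¹`), the image `F(M)` is the closed annulus `{1 ≤ |v| ≤ 2}` and the fiber over
any point `v` with `1 < |v| < 2` has exactly `n` connected components, each
homeomorphic to a 2-torus. -/
theorem annulus_system_image_and_fibers
    (n : ℕ) (hn : 0 < n)
    (F : (Set.Icc (1:ℝ) 2 × Real.Angle × Real.Angle × Real.Angle) → ℝ × ℝ)
    (hF : F = fun p => ((p.1 : ℝ) * Real.Angle.cos (n • p.2.2.1),
                        (p.1 : ℝ) * Real.Angle.sin (n • p.2.2.1))) :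
    Set.range F =
      {v : ℝ × ℝ | 1 ≤ Real.sqrt (v.1 ^ 2 + v.2 ^ 2) ∧ Real.sqrt (v.1 ^ 2 + v.2 ^ 2) ≤ 2}
    ∧ ∀ v : ℝ × ℝ, 1 < Real.sqrt (v.1 ^ 2 + v.2 ^ 2) → Real.sqrt (v.1 ^ 2 + v.2 ^ 2) < 2 →
        Nat.card (ConnectedComponents ↥(F ⁻¹' {v})) = n
        ∧ ∀ x ∈ F ⁻¹' {v},
            Nonempty (↥(connectedComponentIn (F ⁻¹' {v}) x) ≃ₜ (Real.Angle × Real.Angle)) := by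
  subst hF
  refine ⟨Subset.antisymm ?_ fun v ⟨h1, h2⟩ => ?_, fun v h1 h2 => ?_⟩
  · rintro _ ⟨⟨h, a, b, c⟩, rfl⟩
    simp only [mem_ofPred_eq, sqrt_polar_sq, abs_of_pos (zero_lt_one.trans_le h.2.1)]
    exact h.2
  · obtain ⟨θ, hθ⟩ := exists_eq_polar v
    obtain ⟨β, hβ⟩ := Real.Angle.exists_nsmul_eq hn.ne' θ
    exact ⟨(⟨_, h1, h2⟩, 0, β, 0), by simp only [hβ]; exact hθ.symm⟩
  · obtain ⟨θ, hθ⟩ := exists_eq_polar v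
    rw [show v = (((⟨_, h1.le, h2.le⟩ : Icc (1 : ℝ) 2) : ℝ) * θ.cos, _) from hθ,
      preimage_polar_nsmul_singleton]
    refine ⟨card_connectedComponents_setOf_nsmul_eq hn, fun x hx => ?_⟩
    rw [connectedComponentIn_setOf_nsmul_eq hn hx]
    exact ⟨(isEmbedding_torusSlice x.1 x.2.2.1).toHomeomorph.symm⟩
end

section
/- For the spherical pendulum F = (J,H) on TS², the set of points (q,p) ∈ TS² at which dH and dJ are linearly dependent equals {((0,0,1),(0,0,0))} ∪ { (q, (1/λ) q × k) : q³ = −λ², (q¹)² + (q²)² = 1 − λ⁴, 0 < |λ| ≤ 1 }. In particular, this set has measure zero, so F is an integrable system. -/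
/-!
Write `k = e₃`. The second field `v₂ = -(q × k, p × k)` vanishes only where `q` and `p` are
vertical, which on `TS²` means `p = 0` and `q = ±k`. Elsewhere dependence means `v₁ = μ v₂`:
the first component gives `p = -μ q × k`, and then the second reads
`(c + μ²) q = (1 + μ² q³) k` with `c = q³ - ‖p‖²`, so for `q` off the axis `c = -μ²` and
`q³ = -1/μ²`; with `l = -1/μ` this is the stated family. The locus lies over the unit sphere,
a null set of `ℝ³`, so it is null in `ℝ³ × ℝ³`.
-/

open MeasureTheory Matrix

theorem volume_setOf_sum_sq_eq_one {ι : Type*} [Fintype ι] :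
    volume {x : ι → ℝ | ∑ i, x i ^ 2 = 1} = 0 := by
  cases isEmpty_or_nonempty ι
  · simp
  · rw [← (EuclideanSpace.volume_preserving_symm_measurableEquiv_toLp ι).measure_preimage_equiv,
      ← Measure.addHaar_sphere volume (0 : EuclideanSpace ℝ ι) 1]
    congr 1
    ext x
    simp [EuclideanSpace.norm_eq, Real.sqrt_eq_one]

theorem not_linearIndependent_pair_iff {K V : Type*} [DivisionRing K] [AddCommGroup V]
    [Module K V] {x y : V} :
    ¬ LinearIndependent K ![x, y] ↔ y = 0 ∨ ∃ a : K, a • y = x := by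
  rw [← LinearIndependent.pair_symm_iff]
  rcases eq_or_ne y 0 with rfl | hy
  · simpa using fun h => h.ne_zero 0 rfl
  · simp [LinearIndependent.pair_iff' hy, hy]

theorem cross_e₃ {R : Type*} [CommRing R] (u : Fin 3 → R) :
    u ⨯₃ ![0, 0, 1] = ![u 1, -u 0, 0] := by
  simp [cross_apply]

theorem cross_e₃_eq_zero_iff {R : Type*} [CommRing R] {u : Fin 3 → R} :
    u ⨯₃ ![0, 0, 1] = 0 ↔ u 0 = 0 ∧ u 1 = 0 := by
  simp [cross_e₃, funext_iff, Fin.forall_fin_succ, and_comm]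

/-- The uniform horizontal rotations of the pendulum at height `-l²` (the conical pendulum);
`l = ±1` is the lower equilibrium. -/
def IsRelativeEquilibrium (l : ℝ) (q p : Fin 3 → ℝ) : Prop :=
  0 < |l| ∧ |l| ≤ 1 ∧ q 2 = -l ^ 2 ∧ q 0 ^ 2 + q 1 ^ 2 = 1 - l ^ 4 ∧
    p = (1 / l) • q ⨯₃ ![0, 0, 1]

namespace IsRelativeEquilibrium

variable {l : ℝ} {q p : Fin 3 → ℝ}

theorem of_mem_sphere (hl : l ≠ 0) (hq : q 0 ^ 2 + q 1 ^ 2 + q 2 ^ 2 = 1) (hq2 : q 2 = -l ^ 2)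
    (hp : p = (1 / l) • q ⨯₃ ![0, 0, 1]) : IsRelativeEquilibrium l q p := by
  have hq01 : q 0 ^ 2 + q 1 ^ 2 = 1 - l ^ 4 := by rw [← hq, hq2]; ring
  have hl1 : l ^ 2 ≤ 1 := by nlinarith [sq_nonneg (q 0), sq_nonneg (q 1)]
  exact ⟨abs_pos.2 hl, (sq_le_one_iff_abs_le_one l).1 hl1, hq2, hq01, hp⟩

theorem sphere (h : IsRelativeEquilibrium l q p) : q 0 ^ 2 + q 1 ^ 2 + q 2 ^ 2 = 1 := by
  obtain ⟨-, -, hq2, hq01, -⟩ := h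
  linear_combination hq01 + (q 2 - l ^ 2) * hq2

theorem tangent (h : IsRelativeEquilibrium l q p) : q 0 * p 0 + q 1 * p 1 + q 2 * p 2 = 0 := by
  rw [← vec3_dotProduct, h.2.2.2.2, dotProduct_smul, dot_self_cross, smul_zero]

theorem smul_eq (h : IsRelativeEquilibrium l q p) :
    (-1 / l) • (-(q ⨯₃ ![0, 0, 1]), -(p ⨯₃ ![0, 0, 1])) =
      (p, -![0, 0, 1] + (q 2 - (p 0 ^ 2 + p 1 ^ 2 + p 2 ^ 2)) • q) := by
  have hl : l ≠ 0 := abs_pos.1 h.1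
  have hp : p = ![q 1 / l, -q 0 / l, 0] := by
    rw [h.2.2.2.2, cross_e₃]
    simp [div_eq_inv_mul]
  obtain ⟨-, -, hq2, hq01, -⟩ := h
  have hc : q 2 - (p 0 ^ 2 + p 1 ^ 2 + p 2 ^ 2) = -1 / l ^ 2 := by
    simp only [hp, hq2, cons_val]
    field_simp
    linear_combination -hq01
  rw [hc, hp]
  ext i <;> fin_cases i <;> simp [cross_e₃, hq2] <;> field_simp; norm_num

end IsRelativeEquilibrium

theorem isRelativeEquilibrium_of_smul_eq {q p : Fin 3 → ℝ} {μ c : ℝ}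
    (hq : q 0 ^ 2 + q 1 ^ 2 + q 2 ^ 2 = 1) (hqk : q ⨯₃ ![0, 0, 1] ≠ 0)
    (h : μ • (-(q ⨯₃ ![0, 0, 1]), -(p ⨯₃ ![0, 0, 1])) = (p, -![0, 0, 1] + c • q)) :
    IsRelativeEquilibrium (-1 / μ) q p := by
  simp only [Prod.smul_mk, Prod.mk.injEq] at h
  obtain ⟨hp, hv⟩ := h
  have hp0 : p 0 = -μ * q 1 := by simpa [cross_e₃] using (congrFun hp 0).symm
  have hp1 : p 1 = μ * q 0 := by simpa [cross_e₃] using (congrFun hp 1).symm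
  have h0 : -μ * p 1 = c * q 0 := by simpa [cross_e₃] using congrFun hv 0
  have h1 : μ * p 0 = c * q 1 := by simpa [cross_e₃] using congrFun hv 1
  have h2 : 0 = -1 + c * q 2 := by simpa [cross_e₃] using congrFun hv 2
  have hc : c = -μ ^ 2 := by
    rcases not_and_or.1 (mt cross_e₃_eq_zero_iff.2 hqk) with hq0 | hq1
    · exact mul_right_cancel₀ hq0 (by linear_combination -h0 - μ * hp1)
    · exact mul_right_cancel₀ hq1 (by linear_combination -h1 + μ * hp0)
  have hμ : μ ≠ 0 := by rintro rfl; simp [hc] at h2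
  refine .of_mem_sphere (by simpa) hq ?_ ?_
  · field_simp
    linear_combination h2 + q 2 * hc
  · rw [← hp, one_div_div, div_neg, div_one, smul_neg, neg_smul]

theorem eq_north_pole_or_isRelativeEquilibrium {q p : Fin 3 → ℝ}
    (hq : q 0 ^ 2 + q 1 ^ 2 + q 2 ^ 2 = 1) (hqp : q 0 * p 0 + q 1 * p 1 + q 2 * p 2 = 0)
    (hqk : q ⨯₃ ![0, 0, 1] = 0) (hpk : p ⨯₃ ![0, 0, 1] = 0) :
    q = ![0, 0, 1] ∧ p = ![0, 0, 0] ∨ ∃ l, IsRelativeEquilibrium l q p := by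
  obtain ⟨hq0, hq1⟩ := cross_e₃_eq_zero_iff.1 hqk
  obtain ⟨hp0, hp1⟩ := cross_e₃_eq_zero_iff.1 hpk
  simp only [hq0, hq1, hp0, hp1] at hq hqp
  have hq2 : q 2 = 1 ∨ q 2 = -1 := sq_eq_one_iff.1 (by linarith)
  have hp2 : p 2 = 0 := by rcases hq2 with h | h <;> simp_all
  rcases hq2 with h | h
  · left
    constructor <;> ext i <;> fin_cases i <;> simp [*]
  · right
    refine ⟨1, .of_mem_sphere one_ne_zero (by simp [*]) (by simp [h]) ?_⟩
    ext i; fin_cases i <;> simp [*]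

/-- For the spherical pendulum `F = (J, H)` on `TS²`, the set of points where `dH` and
`dJ` are linearly dependent (equivalently, where the two Hamiltonian vector fields
`v₁ = (p, −k + (q³ − ‖p‖²) q)` and `v₂ = (−q×k, −p×k)` are linearly dependent) equals
`{((0,0,1),(0,0,0))} ∪ {(q, (1/λ) q×k) : q³ = −λ², (q¹)² + (q²)² = 1 − λ⁴, 0 < |λ| ≤ 1}`;
in particular this set has measure zero, so `F` is an integrable system. -/
theorem spherical_pendulum_dependence_locus
    (cross : (Fin 3 → ℝ) → (Fin 3 → ℝ) → (Fin 3 → ℝ))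
    (hcross : cross = fun u v =>
      ![u 1 * v 2 - u 2 * v 1, u 2 * v 0 - u 0 * v 2, u 0 * v 1 - u 1 * v 0])
    (k : Fin 3 → ℝ) (hk : k = ![0, 0, 1])
    (TS2 : Set ((Fin 3 → ℝ) × (Fin 3 → ℝ)))
    (hTS2 : TS2 = {qp | qp.1 0 ^ 2 + qp.1 1 ^ 2 + qp.1 2 ^ 2 = 1 ∧
      qp.1 0 * qp.2 0 + qp.1 1 * qp.2 1 + qp.1 2 * qp.2 2 = 0})
    (v₁ v₂ : ((Fin 3 → ℝ) × (Fin 3 → ℝ)) → ((Fin 3 → ℝ) × (Fin 3 → ℝ)))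
    (hv₁ : v₁ = fun qp => (qp.2,
      -k + (qp.1 2 - (qp.2 0 ^ 2 + qp.2 1 ^ 2 + qp.2 2 ^ 2)) • qp.1))
    (hv₂ : v₂ = fun qp => (-(cross qp.1 k), -(cross qp.2 k)))
    (D : Set ((Fin 3 → ℝ) × (Fin 3 → ℝ)))
    (hD : D = {qp ∈ TS2 | ¬ LinearIndependent ℝ ![v₁ qp, v₂ qp]}) :
    D = {(![0, 0, 1], ![0, 0, 0])} ∪
        {qp | ∃ l : ℝ, 0 < |l| ∧ |l| ≤ 1 ∧ qp.1 2 = -l ^ 2 ∧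
          qp.1 0 ^ 2 + qp.1 1 ^ 2 = 1 - l ^ 4 ∧ qp.2 = (1 / l) • cross qp.1 k}
    ∧ (volume : Measure ((Fin 3 → ℝ) × (Fin 3 → ℝ))) D = 0 := by
  obtain rfl : cross = fun u v => u ⨯₃ v := hcross
  subst hk hTS2 hv₁ hv₂ hD
  refine ⟨?_, measure_mono_null (fun qp hqp => by simpa [Fin.sum_univ_three] using hqp.1.1)
    (Measure.quasiMeasurePreserving_fst.preimage_null volume_setOf_sum_sq_eq_one)⟩
  ext ⟨q, p⟩
  change _ ↔ _ ∨ ∃ l, IsRelativeEquilibrium l q p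
  simp only [Set.mem_singleton_iff, Prod.mk.injEq, not_linearIndependent_pair_iff]
  constructor
  · rintro ⟨⟨hq, hqp⟩, hv₂ | ⟨μ, hμ⟩⟩
    · simp only [Prod.mk_eq_zero, neg_eq_zero] at hv₂
      exact eq_north_pole_or_isRelativeEquilibrium hq hqp hv₂.1 hv₂.2
    · by_cases hqk : q ⨯₃ ![0, 0, 1] = 0
      · have hp : p = 0 := by simpa [hqk] using (congrArg Prod.fst hμ).symm
        exact eq_north_pole_or_isRelativeEquilibrium hq hqp hqk (by simp [hp])
      · exact Or.inr ⟨_, isRelativeEquilibrium_of_smul_eq hq hqk hμ⟩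
  · rintro (⟨rfl, rfl⟩ | ⟨l, hl : IsRelativeEquilibrium l q p⟩)
    · exact ⟨by simp, Or.inl (by simp [cross_e₃])⟩
    · exact ⟨⟨hl.sphere, hl.tangent⟩, Or.inr ⟨-1 / l, hl.smul_eq⟩⟩
end

section
/- For the spherical pendulum, the critical values of F = (J,H) lying on relative equilibria form the parametric curve λ ↦ (j(λ), h(λ)) = ((λ⁴−1)/λ, (1−3λ⁴)/(2λ²)), 0 < |λ| ≤ 1; eliminating λ, the two branches satisfy j(h) = ± (2/9)(3 − h² + h√(h²+3)) √(h + √(h²+3)) for h ≥ −1, and the curve meets the j-axis (h = 0) at j = ± 2·3^{1/4}/3 and has its lower tip at (j,h) = (0,−1). -/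
lemma sp_key (l : ℝ) (hl : l ≠ 0) :
    (2 / 9) * (3 - ((1 - 3 * l ^ 4) / (2 * l ^ 2)) ^ 2 +
      ((1 - 3 * l ^ 4) / (2 * l ^ 2)) *
        Real.sqrt (((1 - 3 * l ^ 4) / (2 * l ^ 2)) ^ 2 + 3)) *
      Real.sqrt (((1 - 3 * l ^ 4) / (2 * l ^ 2)) +
        Real.sqrt (((1 - 3 * l ^ 4) / (2 * l ^ 2)) ^ 2 + 3)) = (1 - l ^ 4) / |l| := by
  have hl2 : (0:ℝ) < l ^ 2 := by positivity
  have h1 : ((1 - 3 * l ^ 4) / (2 * l ^ 2)) ^ 2 + 3 = ((1 + 3 * l ^ 4) / (2 * l ^ 2)) ^ 2 := by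
    field_simp; ring
  have h2 : Real.sqrt (((1 - 3 * l ^ 4) / (2 * l ^ 2)) ^ 2 + 3)
      = (1 + 3 * l ^ 4) / (2 * l ^ 2) := by
    rw [h1]; exact Real.sqrt_sq (by positivity)
  rw [h2]
  have h3 : ((1 - 3 * l ^ 4) / (2 * l ^ 2)) + (1 + 3 * l ^ 4) / (2 * l ^ 2) = 1 / l ^ 2 := by
    field_simp
    norm_num
  rw [h3]
  have h4 : Real.sqrt (1 / l ^ 2) = 1 / |l| := by
    rw [one_div, Real.sqrt_inv, Real.sqrt_sq_eq_abs, one_div]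
  rw [h4]
  have habs : |l| ≠ 0 := abs_ne_zero.mpr hl
  field_simp
  ring

/-- The curve of critical values of the spherical pendulum on relative equilibria:
`λ ↦ (j(λ), h(λ)) = ((λ⁴−1)/λ, (1−3λ⁴)/(2λ²))` for `0 < |λ| ≤ 1`; along it `h ≥ −1`
and `j = ± (2/9)(3 − h² + h√(h²+3))√(h + √(h²+3))`, the curve meets the `j`-axis
(`h = 0`) at `j = ± 2·3^{1/4}/3`, and its lower tip, at `λ = ±1`, is `(j,h) = (0,−1)`. -/
theorem spherical_pendulum_critical_curve
    (j h : ℝ → ℝ)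
    (hj : j = fun l => (l ^ 4 - 1) / l)
    (hh : h = fun l => (1 - 3 * l ^ 4) / (2 * l ^ 2))
    (E : ℝ → ℝ)
    (hE : E = fun y => (2 / 9) * (3 - y ^ 2 + y * Real.sqrt (y ^ 2 + 3)) *
      Real.sqrt (y + Real.sqrt (y ^ 2 + 3))) :
    (∀ l : ℝ, 0 < |l| → |l| ≤ 1 →
      (-1 ≤ h l ∧ (j l = E (h l) ∨ j l = -E (h l))))
    ∧ (h 1 = -1 ∧ j 1 = 0 ∧ h (-1) = -1 ∧ j (-1) = 0)
    ∧ (∀ l : ℝ, 0 < |l| → |l| ≤ 1 → h l = 0 →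
        (j l = 2 * (3 : ℝ) ^ ((1 : ℝ) / 4) / 3 ∨
         j l = -(2 * (3 : ℝ) ^ ((1 : ℝ) / 4) / 3))) := by
  subst hj hh hE
  refine ⟨?_, ?_, ?_⟩
  · intro l hl0 hl1
    have hl : l ≠ 0 := by
      intro h; rw [h] at hl0; simp at hl0
    have hl2 : (0:ℝ) < l ^ 2 := by positivity
    constructor
    · -- h l ≥ -1
      have hsq : l ^ 2 ≤ 1 := by
        have := abs_le_one_iff_mul_self_le_one.mp hl1
        nlinarith [this]
      show (-1:ℝ) ≤ (1 - 3 * l ^ 4) / (2 * l ^ 2)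
      rw [le_div_iff₀ (by positivity)]
      nlinarith [sq_nonneg l, sq_nonneg (l^2)]
    · have hk := sp_key l hl
      simp only []
      rw [hk]
      rcases lt_or_gt_of_ne hl with hneg | hpos
      · left
        rw [abs_of_neg hneg, div_neg, ← neg_div]
        ring_nf
      · right
        rw [abs_of_pos hpos, ← neg_div]
        ring_nf
  · norm_num
  · intro l hl0 hl1 hl4
    have hl : l ≠ 0 := by
      intro h; rw [h] at hl0; simp at hl0
    have hl2 : (2 * l ^ 2) ≠ 0 := by positivity
    have h14 : l ^ 4 = 1 / 3 := by
      have := (div_eq_zero_iff.mp hl4).resolve_right hl2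
      linarith
    set a := (3 : ℝ) ^ ((1 : ℝ) / 4) with ha
    have ha0 : 0 < a := Real.rpow_pos_of_pos (by norm_num) _
    have ha4 : a ^ 4 = 3 := by
      rw [ha, ← Real.rpow_natCast ((3:ℝ) ^ ((1:ℝ)/4)) 4, ← Real.rpow_mul (by norm_num)]
      norm_num
    have hal : (a * l) ^ 4 = 1 := by
      rw [mul_pow, ha4, h14]; norm_num
    have hsq : (a * l) ^ 2 = 1 := by
      have hz : ((a*l)^2 - 1) * ((a*l)^2 + 1) = 0 := by linear_combination hal
      rcases mul_eq_zero.mp hz with h' | h'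
      · linarith
      · nlinarith [sq_nonneg (a*l)]
    have hcase : a * l = 1 ∨ a * l = -1 := by
      have hz : (a * l - 1) * (a * l + 1) = 0 := by linear_combination hsq
      rcases mul_eq_zero.mp hz with h' | h'
      · left; linarith
      · right; linarith
    rcases hcase with h' | h'
    · right
      simp only []
      rw [h14]
      field_simp
      linarith
    · left
      simp only []
      rw [h14]
      field_simp
      linarith
end
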